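/- arXiv:1501.05044 — 5 statements merged into one kernel-verified Lean document; each statement's English description precedes it below -/
import Mathlib

section
/- Let n and n_u be even positive integers, and let A ∈ ℝ^{n×n}, B_u ∈ ℝ^{n×n_u}, C ∈ ℝ^{n_u×n} be real matrices. Define S̃ = Θ_n B_u Θ_{n_u} B_uᵀ Θ_n − Θ_n A − Aᵀ Θ_n − Cᵀ Θ_{n_u} C and let r = rank(S̃). Then r is even and there exists a real matrix B_{v2} ∈ ℝ^{n×r} such that, with B_{v1} = Θ_n Cᵀ Θ_{n_u}, the physical realizability equation A Θ_n + Θ_n Aᵀ + B_u Θ_{n_u} B_uᵀ + B_{v1} Θ_{n_u} B_{v1}ᵀ + B_{v2} Θ_r B_{v2}ᵀ = 0 holds. (Theorem 2, sufficiency: the given strictly proper system can be physically realized with exactly r additional quantum noise channels.) -/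
/-!
The matrix `S̃` is skew-symmetric, and since `Θ² = -1` the left-hand side of the realizability
equation without the `B_{v2}` term is `Θ_n S̃ Θ_n`. A real skew-symmetric matrix `M` of rank `r`
has even rank and factors as `M = B Θ_r Bᵀ`: if `uᵀ M v = 1`, subtracting the wedge
`(M u) ∧ (M v)` from `M` keeps it skew-symmetric, annihilates `u` and `v`, and so lowers the rank
by two. Then `B_{v2} = Θ_n B` gives `B_{v2} Θ_r B_{v2}ᵀ = -Θ_n S̃ Θ_n`.
-/

open Matrix

noncomputable section

/-- The canonical `k × k` block-diagonal skew-symmetric matrix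
`Θ_k = diag(J, …, J)` with `J = [[0,1],[-1,0]]` (for `k` even). -/
def ThetaM (k : ℕ) : Matrix (Fin k) (Fin k) ℝ :=
  Matrix.of fun i j =>
    if j.val = i.val + 1 ∧ i.val % 2 = 0 then 1
    else if i.val = j.val + 1 ∧ j.val % 2 = 0 then -1
    else 0

open Module

theorem LinearMap.finrank_range_add_card_le {K V W W' ι : Type*} [Field K] [AddCommGroup V]
    [Module K V] [FiniteDimensional K V] [AddCommGroup W] [Module K W] [AddCommGroup W']
    [Module K W'] [Fintype ι] {f : V →ₗ[K] W} {g : V →ₗ[K] W'} (hker : ker f ≤ ker g)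
    {v : ι → V} (hv : LinearIndependent K (f ∘ v)) (hgv : ∀ i, g (v i) = 0) :
    finrank K (range g) + Fintype.card ι ≤ finrank K (range f) := by
  set U := Submodule.span K (Set.range v)
  have hU : finrank K U = Fintype.card ι := finrank_span_eq_card (hv.of_comp f)
  have hdisj : U ⊓ ker f = ⊥ := (Submodule.range_ker_disjoint hv).eq_bot
  have hle : U ⊔ ker f ≤ ker g :=
    sup_le (Submodule.span_le.mpr (Set.range_subset_iff.mpr hgv)) hker
  have hsup := Submodule.finrank_sup_add_finrank_inf_eq U (ker f)
  rw [hdisj, finrank_bot, hU] at hsup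
  have := Submodule.finrank_mono hle
  have := f.finrank_range_add_finrank_ker
  have := g.finrank_range_add_finrank_ker
  omega

namespace Matrix

variable {ι K : Type*} [Field K]

def wedge (x y : ι → K) : Matrix ι ι K := vecMulVec x y - vecMulVec y x

theorem transpose_wedge (x y : ι → K) : (wedge x y)ᵀ = -wedge x y := by
  simp [wedge, transpose_vecMulVec]

variable [Fintype ι]

theorem wedge_mulVec (x y z : ι → K) : wedge x y *ᵥ z = (y ⬝ᵥ z) • x - (x ⬝ᵥ z) • y := by
  simp [wedge, sub_mulVec, vecMulVec_mulVec]

variable {M : Matrix ι ι K}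

theorem mulVec_dotProduct_of_transpose_eq_neg (hM : Mᵀ = -M) (x y : ι → K) :
    M *ᵥ x ⬝ᵥ y = -(x ⬝ᵥ M *ᵥ y) := by
  rw [← vecMul_transpose, hM, vecMul_neg, neg_dotProduct, dotProduct_mulVec]

theorem dotProduct_mulVec_self_of_transpose_eq_neg [CharZero K] (hM : Mᵀ = -M) (x : ι → K) :
    x ⬝ᵥ M *ᵥ x = 0 := by
  have := mulVec_dotProduct_of_transpose_eq_neg hM x x
  rw [dotProduct_comm] at this
  exact self_eq_neg.mp this

theorem exists_dotProduct_mulVec_eq_one (hM : M ≠ 0) : ∃ u v : ι → K, u ⬝ᵥ M *ᵥ v = 1 := by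
  classical
  obtain ⟨i, j, hij⟩ : ∃ i j, M i j ≠ 0 := by
    by_contra! h
    exact hM (ext h)
  exact ⟨Pi.single i 1, Pi.single j (M i j)⁻¹, by simp [mulVec_single, hij]⟩

theorem rank_sub_wedge_add_two_le [CharZero K] (hM : Mᵀ = -M) {u v : ι → K}
    (huv : u ⬝ᵥ M *ᵥ v = 1) : (M - wedge (M *ᵥ u) (M *ᵥ v)).rank + 2 ≤ M.rank := by
  have hvu : v ⬝ᵥ M *ᵥ u = -1 := by
    rw [← neg_neg (v ⬝ᵥ _), ← mulVec_dotProduct_of_transpose_eq_neg hM, dotProduct_comm, huv]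
  have huu := dotProduct_mulVec_self_of_transpose_eq_neg hM u
  have hvv := dotProduct_mulVec_self_of_transpose_eq_neg hM v
  have hM' (z : ι → K) : (M - wedge (M *ᵥ u) (M *ᵥ v)) *ᵥ z =
      M *ᵥ z + (v ⬝ᵥ M *ᵥ z) • M *ᵥ u - (u ⬝ᵥ M *ᵥ z) • M *ᵥ v := by
    rw [sub_mulVec, wedge_mulVec, mulVec_dotProduct_of_transpose_eq_neg hM,
      mulVec_dotProduct_of_transpose_eq_neg hM]
    module
  refine LinearMap.finrank_range_add_card_le (v := ![u, v]) (fun z hz ↦ ?_) ?_ ?_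
  · rw [LinearMap.mem_ker, mulVecLin_apply] at hz ⊢
    simp [hM', hz]
  · rw [show ⇑M.mulVecLin ∘ ![u, v] = ![M *ᵥ u, M *ᵥ v] by funext i; fin_cases i <;> rfl,
      LinearIndependent.pair_iff]
    intro s t hst
    have hu := congrArg (u ⬝ᵥ ·) hst
    have hv := congrArg (v ⬝ᵥ ·) hst
    simp only [dotProduct_add, dotProduct_smul, huu, huv, hvu, hvv, dotProduct_zero] at hu hv
    simp_all
  · simp only [Fin.forall_fin_two, cons_val_zero, cons_val_one, mulVecLin_apply, hM', huu, huv,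
      hvu, hvv]
    constructor <;> module

theorem exists_sum_wedge_of_transpose_eq_neg [CharZero K] (hM : Mᵀ = -M) :
    ∃ k, 2 * k ≤ M.rank ∧ ∃ x y : Fin k → ι → K, M = ∑ l, wedge (x l) (y l) := by
  induction hr : M.rank using Nat.strong_induction_on generalizing M with
  | _ r ih =>
  by_cases h0 : M = 0
  · exact ⟨0, by omega, Fin.elim0, Fin.elim0, by simp [h0]⟩
  obtain ⟨u, v, huv⟩ := exists_dotProduct_mulVec_eq_one h0
  have hrank := rank_sub_wedge_add_two_le hM huv
  have hskew : (M - wedge (M *ᵥ u) (M *ᵥ v))ᵀ = -(M - wedge (M *ᵥ u) (M *ᵥ v)) := by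
    rw [transpose_sub, hM, transpose_wedge]; abel
  obtain ⟨k, hk, x, y, hxy⟩ := ih _ (by omega) hskew rfl
  refine ⟨k + 1, by omega, Fin.snoc x (M *ᵥ u), Fin.snoc y (M *ᵥ v), ?_⟩
  simp [Fin.sum_univ_castSucc, ← hxy]

end Matrix

open scoped Kronecker

theorem ThetaM_submatrix_finProdFinEquiv (k : ℕ) :
    (ThetaM (k * 2)).submatrix finProdFinEquiv finProdFinEquiv =
      (1 : Matrix (Fin k) (Fin k) ℝ) ⊗ₖ !![0, 1; -1, 0] := by
  ext ⟨l, i⟩ ⟨l', j⟩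
  fin_cases i <;> fin_cases j <;> simp [ThetaM, one_apply, Fin.ext_iff] <;>
    split_ifs <;> first | (exfalso; omega) | norm_num

theorem ThetaM_transpose (k : ℕ) : (ThetaM k)ᵀ = -ThetaM k := by
  ext i j
  simp only [transpose_apply, Matrix.neg_apply, ThetaM, of_apply]
  split_ifs <;> first | (exfalso; omega) | norm_num

theorem ThetaM_mul_self {k : ℕ} (hk : Even k) : ThetaM k * ThetaM k = -1 := by
  obtain ⟨m, rfl⟩ := hk
  have hJ : !![(0 : ℝ), 1; -1, 0] * !![0, 1; -1, 0] = (-1 : ℝ) • 1 := by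
    ext i j; fin_cases i <;> fin_cases j <;> simp
  rw [← mul_two, ← submatrix_id_id (ThetaM _), ← finProdFinEquiv.self_comp_symm,
    ← submatrix_submatrix, ThetaM_submatrix_finProdFinEquiv, submatrix_mul_equiv,
    ← mul_kronecker_mul, hJ, mul_one, kronecker_smul, one_kronecker_one, Matrix.submatrix_smul]
  simp

theorem ThetaM_mul_ThetaM_mul {k : ℕ} (hk : Even k) {m : Type*} (X : Matrix (Fin k) m ℝ) :
    ThetaM k * (ThetaM k * X) = -X := by
  rw [← Matrix.mul_assoc, ThetaM_mul_self hk, Matrix.neg_mul, Matrix.one_mul]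

theorem exists_sum_wedge_eq_mul_ThetaM_mul_transpose {ι : Type*} [Fintype ι] {k : ℕ}
    (x y : Fin k → ι → ℝ) :
    ∃ B : Matrix ι (Fin (k * 2)) ℝ, ∑ l, wedge (x l) (y l) = B * ThetaM (k * 2) * Bᵀ := by
  set B : Matrix ι (Fin k × Fin 2) ℝ := of fun a p ↦ ![x p.1 a, y p.1 a] p.2
  refine ⟨B.submatrix id finProdFinEquiv.symm, ?_⟩
  rw [← submatrix_id_id (ThetaM _), ← finProdFinEquiv.self_comp_symm, ← submatrix_submatrix,
    ThetaM_submatrix_finProdFinEquiv, transpose_submatrix, submatrix_mul_equiv,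
    submatrix_mul_equiv, submatrix_id_id]
  ext a b
  simp only [Matrix.sum_apply, wedge, Matrix.sub_apply, vecMulVec_apply]
  simp [B, mul_apply, Fintype.sum_prod_type, Fin.sum_univ_two, one_apply,
    Finset.sum_add_distrib, sub_eq_neg_add, mul_comm]

theorem exists_eq_mul_ThetaM_rank_mul_transpose {ι : Type*} [Fintype ι] {M : Matrix ι ι ℝ}
    (hM : Mᵀ = -M) : Even M.rank ∧ ∃ B : Matrix ι (Fin M.rank) ℝ, M = B * ThetaM M.rank * Bᵀ := by
  obtain ⟨k, hk, x, y, hxy⟩ := exists_sum_wedge_of_transpose_eq_neg hM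
  obtain ⟨B, hB⟩ := exists_sum_wedge_eq_mul_ThetaM_mul_transpose x y
  have hrank : M.rank = k * 2 := by
    refine le_antisymm ?_ (by omega)
    rw [hxy, hB]
    simpa using (rank_mul_le_right _ _).trans (rank_le_card_height Bᵀ)
  rw [hrank]
  exact ⟨even_two.mul_left k, B, hxy.trans hB⟩

theorem physically_realizable_with_rank_S_additional_noises_general
    (n nu : ℕ) (hne : Even n) (hnue : Even nu)
    (A : Matrix (Fin n) (Fin n) ℝ) (Bu : Matrix (Fin n) (Fin nu) ℝ)
    (C : Matrix (Fin nu) (Fin n) ℝ)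
    (S : Matrix (Fin n) (Fin n) ℝ)
    (hS : S = ThetaM n * Bu * ThetaM nu * Buᵀ * ThetaM n
              - ThetaM n * A - Aᵀ * ThetaM n - Cᵀ * ThetaM nu * C) :
    Even S.rank ∧
    ∃ Bv2 : Matrix (Fin n) (Fin S.rank) ℝ,
      A * ThetaM n + ThetaM n * Aᵀ + Bu * ThetaM nu * Buᵀ +
        (ThetaM n * Cᵀ * ThetaM nu) * ThetaM nu * (ThetaM n * Cᵀ * ThetaM nu)ᵀ +
        Bv2 * ThetaM S.rank * Bv2ᵀ = 0 := by
  have hskew : Sᵀ = -S := by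
    rw [hS]
    simp only [transpose_sub, transpose_mul, transpose_transpose, ThetaM_transpose,
      Matrix.neg_mul, Matrix.mul_neg, neg_neg, Matrix.mul_assoc]
    abel
  obtain ⟨hrank, B, hB⟩ := exists_eq_mul_ThetaM_rank_mul_transpose hskew
  refine ⟨hrank, ThetaM n * B, ?_⟩
  have hnoise :
      (ThetaM n * B) * ThetaM S.rank * (ThetaM n * B)ᵀ = -(ThetaM n * S * ThetaM n) := by
    conv_rhs => rw [hB]
    simp only [transpose_mul, ThetaM_transpose, Matrix.mul_neg, Matrix.mul_assoc]
  have hdrift : A * ThetaM n + ThetaM n * Aᵀ + Bu * ThetaM nu * Buᵀ +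
      (ThetaM n * Cᵀ * ThetaM nu) * ThetaM nu * (ThetaM n * Cᵀ * ThetaM nu)ᵀ =
      ThetaM n * S * ThetaM n := by
    rw [hS]
    simp only [transpose_mul, transpose_transpose, ThetaM_transpose, Matrix.sub_mul,
      Matrix.mul_sub, Matrix.neg_mul, Matrix.mul_neg, neg_neg, Matrix.mul_assoc,
      ThetaM_mul_self hne, ThetaM_mul_self hnue, ThetaM_mul_ThetaM_mul hne,
      Matrix.mul_one]
    abel
  rw [hdrift, hnoise, add_neg_cancel]

/-- **Theorem 2 (sufficiency).** If `S̃ = Θ Bu Θ_{nu} Buᵀ Θ − Θ A − Aᵀ Θ − Cᵀ Θ_{nu} C`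
and `r = rank S̃`, then `r` is even and there is `B_{v2} ∈ ℝ^{n × r}` such that, with
`B_{v1} = Θ Cᵀ Θ_{nu}`, the physical realizability equation holds. -/
theorem physically_realizable_with_rank_S_additional_noises
    (n nu : ℕ) (hn : 0 < n) (hne : Even n) (hnu : 0 < nu) (hnue : Even nu)
    (A : Matrix (Fin n) (Fin n) ℝ) (Bu : Matrix (Fin n) (Fin nu) ℝ)
    (C : Matrix (Fin nu) (Fin n) ℝ)
    (S : Matrix (Fin n) (Fin n) ℝ)
    (hS : S = ThetaM n * Bu * ThetaM nu * Buᵀ * ThetaM n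
              - ThetaM n * A - Aᵀ * ThetaM n - Cᵀ * ThetaM nu * C) :
    Even S.rank ∧
    ∃ Bv2 : Matrix (Fin n) (Fin S.rank) ℝ,
      A * ThetaM n + ThetaM n * Aᵀ + Bu * ThetaM nu * Buᵀ +
        (ThetaM n * Cᵀ * ThetaM nu) * ThetaM nu * (ThetaM n * Cᵀ * ThetaM nu)ᵀ +
        Bv2 * ThetaM S.rank * Bv2ᵀ = 0 :=
  physically_realizable_with_rank_S_additional_noises_general n nu hne hnue A Bu C S hS
end
end

section
/- Let K be a real skew-symmetric n×n matrix. Then there exists a real symmetric n×n matrix Ξ such that the complex matrix Ξ + iK is Hermitian positive semidefinite and rank(Ξ + iK) = (1/2)·rank(K). (In particular, one may take Ξ to be the positive semidefinite square root of −K², i.e. if iK = U†DU is a spectral decomposition with U unitary and D real diagonal, then Ξ = U†|D|U works, and Ξ + iK = U†(|D| + D)U.) -/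
open Matrix
open scoped ComplexOrder

noncomputable section

/-- The complexification of a real matrix. -/
def toC {m n : ℕ} (M : Matrix (Fin m) (Fin n) ℝ) : Matrix (Fin m) (Fin n) ℂ :=
  M.map Complex.ofReal

/-!
Put `A = iK`, a Hermitian matrix with `Aᵀ = -A`, and let `|A|` be its absolute value in the
functional calculus. Both `|A|` and `|A|ᵀ` are positive square roots of `A² = (Aᵀ)²`, so `|A|` is
symmetric; being also Hermitian, it is real, and `Ξ` is its real part. The matrix `|A| + A` is
positive semidefinite of rank the number of positive eigenvalues of `A`, and its transpose
`|A| - A` has rank the number of negative ones. Transposition preserves rank, so twice the rank of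
`|A| + A` is the number of nonzero eigenvalues, which is `rank A = rank K`.
-/

section LinearOrder

variable {α : Type*} [AddCommGroup α] [LinearOrder α] [IsOrderedAddMonoid α]

theorem abs_add_self_ne_zero_iff (a : α) : |a| + a ≠ 0 ↔ 0 < a := by
  rcases le_or_gt a 0 with h | h
  · simp [abs_of_nonpos h, h]
  · simp [abs_of_pos h, h, (add_pos h h).ne']

theorem abs_sub_self_ne_zero_iff (a : α) : |a| - a ≠ 0 ↔ a < 0 := by
  rw [← abs_neg, sub_eq_add_neg, abs_add_self_ne_zero_iff, neg_pos]

end LinearOrder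

namespace Matrix

variable {n : Type*} [Fintype n] [DecidableEq n]

theorem rank_mul_diagonal_mul_of_isUnit_det {F : Type*} [Field F] [DecidableEq F]
    {P Q : Matrix n n F} (hP : IsUnit P.det) (hQ : IsUnit Q.det) (d : n → F) :
    (P * diagonal d * Q).rank = Fintype.card {i // d i ≠ 0} := by
  rw [rank_mul_eq_left_of_isUnit_det _ _ hQ, rank_mul_eq_right_of_isUnit_det _ _ hP,
    rank_diagonal]

theorem rank_map_ringHom {F L : Type*} [Field F] [Field L] (f : F →+* L) (M : Matrix n n F) :
    (M.map f).rank = M.rank := by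
  classical
  obtain ⟨T, T', d, rfl⟩ := Pivot.exists_list_transvec_mul_diagonal_mul_list_transvec M
  have hdet (T : List (TransvectionStruct n F)) :
      IsUnit (List.map TransvectionStruct.toMatrix T).prod.det := by
    simp [TransvectionStruct.det_toMatrix_prod]
  have hdet_map (T : List (TransvectionStruct n F)) :
      IsUnit (f.mapMatrix (List.map TransvectionStruct.toMatrix T).prod).det := by
    rw [← RingHom.map_det]
    exact (hdet T).map f
  rw [← RingHom.mapMatrix_apply, map_mul, map_mul, RingHom.mapMatrix_apply (M := diagonal d),
    diagonal_map (map_zero f), rank_mul_diagonal_mul_of_isUnit_det (hdet_map T) (hdet_map T'),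
    rank_mul_diagonal_mul_of_isUnit_det (hdet T) (hdet T')]
  simp only [ne_eq, map_eq_zero]

namespace IsHermitian

variable {𝕜 : Type*} [RCLike 𝕜] {A : Matrix n n 𝕜}

theorem rank_cfc (hA : A.IsHermitian) (f : ℝ → ℝ) :
    (cfc f A).rank = Fintype.card {i // f (hA.eigenvalues i) ≠ 0} := by
  classical
  rw [hA.cfc_eq, IsHermitian.cfc, Unitary.conjStarAlgAut_apply, ← Unitary.coe_star,
    rank_mul_diagonal_mul_of_isUnit_det (UnitaryGroup.det_isUnit _) (UnitaryGroup.det_isUnit _)]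
  simp

open scoped MatrixOrder in
theorem transpose_cfc_abs (hA : A.IsHermitian) (hAT : Aᵀ = -A) :
    (cfc (|·| : ℝ → ℝ) A)ᵀ = cfc (|·| : ℝ → ℝ) A := by
  have hsq : cfc (|·| : ℝ → ℝ) A ^ 2 = A ^ 2 := by
    rw [← cfc_pow .., ← cfc_pow_id (R := ℝ) A 2 hA]
    exact cfc_congr fun x _ ↦ sq_abs x
  have hnonneg : 0 ≤ cfc (|·| : ℝ → ℝ) A := cfc_nonneg fun x _ ↦ abs_nonneg x
  refine (CFC.sq_eq_sq_iff _ _ (nonneg_iff_posSemidef.mpr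
    (nonneg_iff_posSemidef.mp hnonneg).transpose) hnonneg).mp ?_
  rw [← transpose_pow, hsq, transpose_pow, hAT, neg_sq]

theorem cfc_abs_add_self (hA : A.IsHermitian) :
    cfc (|·| : ℝ → ℝ) A + A = cfc (fun x : ℝ ↦ |x| + x) A := by
  rw [cfc_add A (fun x : ℝ ↦ |x|) (fun x ↦ x), cfc_id' ℝ A]

theorem cfc_abs_sub_self (hA : A.IsHermitian) :
    cfc (|·| : ℝ → ℝ) A - A = cfc (fun x : ℝ ↦ |x| - x) A := by
  rw [cfc_sub (fun x : ℝ ↦ |x|) (fun x ↦ x) A, cfc_id' ℝ A]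

open scoped MatrixOrder in
theorem posSemidef_cfc_abs_add_self (hA : A.IsHermitian) :
    (cfc (|·| : ℝ → ℝ) A + A).PosSemidef := by
  rw [← nonneg_iff_posSemidef, hA.cfc_abs_add_self]
  exact cfc_nonneg fun x _ ↦ neg_le_iff_add_nonneg'.mp (neg_abs_le x)

theorem two_mul_rank_cfc_abs_add_self (hA : A.IsHermitian) (hAT : Aᵀ = -A) :
    2 * (cfc (|·| : ℝ → ℝ) A + A).rank = A.rank := by
  have hpos : (cfc (|·| : ℝ → ℝ) A + A).rank = Fintype.card {i // 0 < hA.eigenvalues i} := by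
    rw [hA.cfc_abs_add_self, hA.rank_cfc]
    simp_rw [abs_add_self_ne_zero_iff]
  have hneg : (cfc (|·| : ℝ → ℝ) A + A).rank = Fintype.card {i // hA.eigenvalues i < 0} := by
    rw [← rank_transpose, transpose_add, hA.transpose_cfc_abs hAT, hAT, ← sub_eq_add_neg,
      hA.cfc_abs_sub_self, hA.rank_cfc]
    simp_rw [abs_sub_self_ne_zero_iff]
  rw [two_mul]
  nth_rw 1 [hpos]
  rw [hneg, ← Fintype.card_subtype_or_disjoint, hA.rank_eq_card_non_zero_eigs]
  · simp_rw [ne_iff_lt_or_gt, or_comm]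
  · exact Pi.disjoint_iff.mpr fun i ↦ Prop.disjoint_iff.mpr fun h ↦ lt_asymm h.1 h.2

end IsHermitian

end Matrix

section Complexification

variable {m n : ℕ}

theorem toC_conjTranspose (M : Matrix (Fin m) (Fin n) ℝ) : (toC M)ᴴ = toC Mᵀ := by
  ext i j
  simp [toC]

theorem toC_neg (M : Matrix (Fin m) (Fin n) ℝ) : toC (-M) = -toC M :=
  Matrix.map_neg _ Complex.ofReal_neg M

theorem toC_transpose (M : Matrix (Fin m) (Fin n) ℝ) : (toC M)ᵀ = toC Mᵀ :=
  rfl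

theorem toC_map_re_of_isHermitian {M : Matrix (Fin n) (Fin n) ℂ} (hH : M.IsHermitian)
    (hT : Mᵀ = M) : toC (M.map Complex.re) = M := by
  ext i j
  refine Complex.conj_eq_iff_re.mp ?_
  rw [← Complex.star_def, ← conjTranspose_apply, hH.eq, ← transpose_apply M i j, hT]

theorem rank_toC (M : Matrix (Fin n) (Fin n) ℝ) : (toC M).rank = M.rank :=
  rank_map_ringHom Complex.ofRealHom M

theorem isHermitian_I_smul_toC {K : Matrix (Fin n) (Fin n) ℝ} (hK : Kᵀ = -K) :
    (Complex.I • toC K).IsHermitian := by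
  rw [IsHermitian, conjTranspose_smul, toC_conjTranspose, hK, toC_neg, smul_neg,
    Complex.star_def, Complex.conj_I, neg_smul, neg_neg]

theorem transpose_I_smul_toC {K : Matrix (Fin n) (Fin n) ℝ} (hK : Kᵀ = -K) :
    (Complex.I • toC K)ᵀ = -(Complex.I • toC K) := by
  rw [transpose_smul, toC_transpose, hK, toC_neg, smul_neg]

end Complexification

/-- For a real skew-symmetric `K`, there is a real symmetric `Ξ` such that
`Ξ + iK` is Hermitian positive semidefinite with rank equal to half the rank of `K`. -/
theorem exists_symm_add_smul_I_posSemidef_rank_half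
    (n : ℕ) (K : Matrix (Fin n) (Fin n) ℝ) (hK : Kᵀ = -K) :
    ∃ Xi : Matrix (Fin n) (Fin n) ℝ, Xiᵀ = Xi ∧
      (toC Xi + Complex.I • toC K).PosSemidef ∧
      2 * (toC Xi + Complex.I • toC K).rank = K.rank := by
  set A := Complex.I • toC K
  have hA : A.IsHermitian := isHermitian_I_smul_toC hK
  have hAT : Aᵀ = -A := transpose_I_smul_toC hK
  set S := cfc (|·| : ℝ → ℝ) A
  have hST : Sᵀ = S := hA.transpose_cfc_abs hAT
  have hS : toC (S.map Complex.re) = S := toC_map_re_of_isHermitian (cfc_predicate _ A) hST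
  refine ⟨S.map Complex.re, by rw [← transpose_map, hST], ?_, ?_⟩
  · rw [hS]
    exact hA.posSemidef_cfc_abs_add_self
  · rw [hS, hA.two_mul_rank_cfc_abs_add_self hAT,
      rank_smul_of_mem_nonZeroDivisors _ (mem_nonZeroDivisors_of_ne_zero Complex.I_ne_zero),
      rank_toC]
end
end

section
/- Let P be a complex Hermitian positive semidefinite n×n matrix such that P² has all real entries. Then P has all real entries (and hence P is a real symmetric matrix). -/
open Matrix
open scoped ComplexOrder

namespace Matrix

variable {m : Type*}

lemma IsHermitian.transpose_eq_self_iff_im_eq_zero {A : Matrix m m ℂ} (hA : A.IsHermitian) :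
    Aᵀ = A ↔ ∀ i j, (A i j).im = 0 := by
  have hT : Aᵀ = A.map star := by simpa only [hA.eq] using conjTranspose_transpose A
  simp only [hT, ← Matrix.ext_iff, map_apply, RCLike.star_def, Complex.conj_eq_iff_im]

open scoped MatrixOrder in
/-- A positive semidefinite square root is unique, and `Aᵀ` is a positive semidefinite
square root of `(A * A)ᵀ`. -/
lemma PosSemidef.transpose_eq_self_of_transpose_mul_self {𝕜 : Type*} [RCLike 𝕜] [Fintype m]
    [DecidableEq m] {A : Matrix m m 𝕜} (hA : A.PosSemidef) (hAA : (A * A)ᵀ = A * A) :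
    Aᵀ = A := by
  refine (CFC.sq_eq_sq_iff Aᵀ A hA.transpose.nonneg hA.nonneg).mp ?_
  rw [sq, sq, ← transpose_mul, hAA]

end Matrix

/-- A Hermitian positive semidefinite complex matrix whose square has all real
entries must itself have all real entries (and hence is a real symmetric matrix). -/
theorem posSemidef_real_sq_real
    (n : ℕ) (P : Matrix (Fin n) (Fin n) ℂ) (hP : P.PosSemidef)
    (hPsq : ∀ i j, ((P * P) i j).im = 0) :
    (∀ i j, (P i j).im = 0) ∧ Pᵀ = P := by
  have hPP : (P * P)ᵀ = P * P :=
    (sq P ▸ hP.isHermitian.pow 2).transpose_eq_self_iff_im_eq_zero.mpr hPsq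
  have hT : Pᵀ = P := hP.transpose_eq_self_of_transpose_mul_self hPP
  exact ⟨hP.isHermitian.transpose_eq_self_iff_im_eq_zero.mp hT, hT⟩
end

section
/- Let Ã, R̃, Q̃ be real n×n matrices with R̃ and Q̃ skew-symmetric, and let H = [[Ã, R̃], [−Q̃, −Ãᵀ]] be the associated 2n×2n Hamiltonian matrix. Suppose there exist complex n×n matrices X₁, X₂ with X₁ invertible, and a Hurwitz complex n×n matrix H₋, such that H · [X₁; X₂] = [X₁; X₂] · H₋ (stacking X₁ over X₂). Then X = X₂ X₁⁻¹ is skew-symmetric (Xᵀ = −X) and solves the algebraic Riccati equation Ãᵀ X + X Ã + X R̃ X + Q̃ = 0. (Theorem 4.) -/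
/-! With `K = [[0, I], [I, 0]]`, skew-symmetry of `R̃` and `Q̃` makes `H` skew-adjoint for the
symmetric form `K`, i.e. `Hᵀ K = -K H`. Hence for `Z = [X₁; X₂]` the matrix
`W = Zᵀ K Z = X₁ᵀ X₂ + X₂ᵀ X₁` solves the Sylvester equation `H₋ᵀ W = W (-H₋)`. As `H₋` is
Hurwitz, the spectra of `H₋ᵀ` and `-H₋` lie in opposite open half-planes, so `W = 0`, which is
the skew-symmetry of `X = X₂ X₁⁻¹`. The Riccati equation is the second block row of
`H Z = Z H₋`, with `X₁ H₋` replaced by the first block row and multiplied on the right by `X₁⁻¹`. -/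

open Matrix

noncomputable section

open Polynomial

theorem SemiconjBy.aeval {R A : Type*} [CommSemiring R] [Semiring A] [Algebra R A]
    {w b a : A} (h : SemiconjBy w b a) (p : R[X]) :
    SemiconjBy w (Polynomial.aeval b p) (Polynomial.aeval a p) := by
  simp only [SemiconjBy, aeval_eq_sum_range, Finset.mul_sum, Finset.sum_mul]
  exact Finset.sum_congr rfl fun i _ => ((h.pow_right i).smul_right _).eq

theorem Matrix.eq_zero_of_mul_eq_mul_of_disjoint_spectrum {𝕜 ι : Type*} [Field 𝕜]
    [IsAlgClosed 𝕜] [Fintype ι] [DecidableEq ι]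
    {A B W : Matrix ι ι 𝕜} (h : A * W = W * B)
    (hAB : Disjoint (spectrum 𝕜 A) (spectrum 𝕜 B)) : W = 0 := by
  -- `χ_A(B)` is invertible because its eigenvalues are the values `χ_A(k) ≠ 0`, `k ∈ σ(B)`.
  have hW : W * aeval B A.charpoly = 0 := by
    rw [(SemiconjBy.aeval h.symm A.charpoly).eq, aeval_self_charpoly, zero_mul]
  have hunit : IsUnit (aeval B A.charpoly) := by
    by_contra hnu
    rw [(IsAlgClosed.splits A.charpoly).eq_prod_roots_of_monic A.charpoly_monic] at hnu
    obtain ⟨k, hkB, hkA⟩ := spectrum.exists_mem_of_not_isUnit_aeval_prod hnu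
    exact hAB.ne_of_mem (mem_spectrum_iff_isRoot_charpoly.mpr hkA) hkB rfl
  exact hunit.mul_left_eq_zero.mp hW

theorem Matrix.isSkewAdjoint_fromBlocks_swap {R n : Type*} [CommRing R] [Fintype n]
    [DecidableEq n] {A B C : Matrix n n R} (hB : Bᵀ = -B) (hC : Cᵀ = -C) :
    (fromBlocks 0 1 1 0 : Matrix (n ⊕ n) (n ⊕ n) R).IsSkewAdjoint
      (fromBlocks A B (-C) (-Aᵀ)) := by
  simp [Matrix.IsSkewAdjoint, Matrix.IsAdjointPair, fromBlocks_transpose, fromBlocks_multiply,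
    fromBlocks_neg, hB, hC]

theorem Matrix.transpose_fromRows_mul_swap_mul_fromRows {R m n : Type*} [CommRing R]
    [Fintype n] [DecidableEq n] (X₁ X₂ : Matrix n m R) :
    (fromRows X₁ X₂)ᵀ * (fromBlocks 0 1 1 0 : Matrix (n ⊕ n) (n ⊕ n) R) * fromRows X₁ X₂ =
      X₁ᵀ * X₂ + X₂ᵀ * X₁ := by
  simp [transpose_fromRows, fromCols_mul_fromBlocks, fromCols_mul_fromRows, add_comm]

theorem Matrix.IsSkewAdjoint.transpose_mul_gram {R m n : Type*} [CommRing R] [Fintype m]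
    [Fintype n] {J H : Matrix n n R} {Z : Matrix n m R} {M : Matrix m m R}
    (hH : J.IsSkewAdjoint H) (hZ : H * Z = Z * M) :
    Mᵀ * (Zᵀ * J * Z) = (Zᵀ * J * Z) * -M := by
  have hH' : Hᵀ * J = J * -H := hH
  calc Mᵀ * (Zᵀ * J * Z) = Zᵀ * (Hᵀ * J) * Z := by
        rw [← Matrix.mul_assoc, ← Matrix.mul_assoc, ← transpose_mul, ← hZ, transpose_mul]
        simp only [Matrix.mul_assoc]
    _ = -(Zᵀ * J * (H * Z)) := by
        rw [hH']; simp only [Matrix.mul_neg, Matrix.neg_mul, Matrix.mul_assoc]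
    _ = (Zᵀ * J * Z) * -M := by
        rw [hZ]; simp only [Matrix.mul_neg, Matrix.mul_assoc]

theorem Matrix.spectrum_transpose {K n : Type*} [Field K] [Fintype n] [DecidableEq n]
    (M : Matrix n n K) : spectrum K Mᵀ = spectrum K M := by
  ext μ
  simp only [mem_spectrum_iff_isRoot_charpoly, charpoly_transpose]

theorem Matrix.disjoint_spectrum_transpose_neg_of_re_neg {n : Type*} [Fintype n]
    [DecidableEq n] {M : Matrix n n ℂ} (hM : ∀ μ ∈ spectrum ℂ M, μ.re < 0) :
    Disjoint (spectrum ℂ Mᵀ) (spectrum ℂ (-M)) := by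
  rw [spectrum_transpose, ← spectrum.neg_eq, Set.disjoint_left]
  intro μ hμ hμneg
  have hre := hM μ hμ
  have hre_neg := hM (-μ) (Set.mem_neg.mp hμneg)
  rw [Complex.neg_re] at hre_neg
  linarith

theorem Matrix.transpose_mul_inv_eq_neg {R n : Type*} [CommRing R] [Fintype n]
    [DecidableEq n] {X₁ X₂ : Matrix n n R} (hX₁ : IsUnit X₁)
    (hW : X₁ᵀ * X₂ + X₂ᵀ * X₁ = 0) : (X₂ * X₁⁻¹)ᵀ = -(X₂ * X₁⁻¹) := by
  have hdet : IsUnit X₁.det := (isUnit_iff_isUnit_det X₁).mp hX₁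
  have hX₂ : X₂ᵀ = -(X₁ᵀ * X₂ * X₁⁻¹) := by
    rw [← mul_nonsing_inv_cancel_right X₁ X₂ᵀ hdet, eq_neg_of_add_eq_zero_right hW,
      Matrix.neg_mul]
  rw [transpose_mul, transpose_nonsing_inv, hX₂, Matrix.mul_neg, ← Matrix.mul_assoc,
    ← Matrix.mul_assoc, nonsing_inv_mul _ (by simpa using hdet), Matrix.one_mul]

theorem Matrix.riccati_of_fromBlocks_mul_fromRows {R n : Type*} [CommRing R] [Fintype n]
    [DecidableEq n] {A B C D X₁ X₂ M : Matrix n n R} (hX₁ : IsUnit X₁)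
    (hInv : fromBlocks A B C D * fromRows X₁ X₂ = fromRows X₁ X₂ * M) :
    X₂ * X₁⁻¹ * A + X₂ * X₁⁻¹ * B * (X₂ * X₁⁻¹) = C + D * (X₂ * X₁⁻¹) := by
  rw [fromBlocks_mul_fromRows, fromRows_mul] at hInv
  obtain ⟨hTop, hBot⟩ := fromRows_inj hInv
  have hdet : IsUnit X₁.det := (isUnit_iff_isUnit_det X₁).mp hX₁
  calc X₂ * X₁⁻¹ * A + X₂ * X₁⁻¹ * B * (X₂ * X₁⁻¹)
      = X₂ * X₁⁻¹ * (A * X₁ + B * X₂) * X₁⁻¹ := by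
        simp only [Matrix.mul_add, Matrix.add_mul, Matrix.mul_assoc,
          mul_nonsing_inv _ hdet, Matrix.mul_one]
    _ = (C * X₁ + D * X₂) * X₁⁻¹ := by
        rw [hTop, hBot, ← Matrix.mul_assoc, nonsing_inv_mul_cancel_right _ _ hdet]
    _ = C + D * (X₂ * X₁⁻¹) := by
        rw [Matrix.add_mul, mul_nonsing_inv_cancel_right _ _ hdet, Matrix.mul_assoc]

theorem toC_transpose_eq_neg {n : ℕ} {M : Matrix (Fin n) (Fin n) ℝ} (hM : Mᵀ = -M) :
    (toC M)ᵀ = -toC M := by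
  rw [toC, ← transpose_map, hM, Matrix.map_neg _ Complex.ofReal_neg]

/-- **Theorem 4.** If `H = [[Ã, R̃], [−Q̃, −Ãᵀ]]` (with `R̃, Q̃` real skew-symmetric) has
an `n`-dimensional invariant graph subspace `[X₁; X₂]` with `X₁` invertible and
restriction `H₋` Hurwitz, then `X = X₂X₁⁻¹` is skew-symmetric and solves the
algebraic Riccati equation `Ãᵀ X + X Ã + X R̃ X + Q̃ = 0`. -/
theorem ric_skew_symmetric_solves_are
    (n : ℕ) (At Rt Qt : Matrix (Fin n) (Fin n) ℝ)
    (hR : Rtᵀ = -Rt) (hQ : Qtᵀ = -Qt)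
    (X₁ X₂ Hminus : Matrix (Fin n) (Fin n) ℂ)
    (hX₁ : IsUnit X₁)
    (hHur : ∀ μ ∈ spectrum ℂ Hminus, μ.re < 0)
    (hInv : Matrix.fromBlocks (toC At) (toC Rt) (-(toC Qt)) (-(toC At)ᵀ) *
        Matrix.fromRows X₁ X₂ = Matrix.fromRows X₁ X₂ * Hminus) :
    (X₂ * X₁⁻¹)ᵀ = -(X₂ * X₁⁻¹) ∧
    (toC At)ᵀ * (X₂ * X₁⁻¹) + (X₂ * X₁⁻¹) * toC At +
      (X₂ * X₁⁻¹) * toC Rt * (X₂ * X₁⁻¹) + toC Qt = 0 := by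
  have hW : X₁ᵀ * X₂ + X₂ᵀ * X₁ = 0 := by
    refine eq_zero_of_mul_eq_mul_of_disjoint_spectrum ?_
      (disjoint_spectrum_transpose_neg_of_re_neg hHur)
    rw [← transpose_fromRows_mul_swap_mul_fromRows]
    exact (isSkewAdjoint_fromBlocks_swap (toC_transpose_eq_neg hR)
      (toC_transpose_eq_neg hQ)).transpose_mul_gram hInv
  refine ⟨transpose_mul_inv_eq_neg hX₁ hW, ?_⟩
  rw [add_assoc _ (X₂ * X₁⁻¹ * toC At), riccati_of_fromBlocks_mul_fromRows hX₁ hInv,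
    Matrix.neg_mul]
  abel
end
end

section
/- Let Ã, R̃, Q̃ be real n×n matrices with R̃ and Q̃ skew-symmetric, let H = [[Ã, R̃], [−Q̃, −Ãᵀ]], and suppose X₁, X₂ are complex n×n matrices and H₋ is a Hurwitz complex n×n matrix such that H · [X₁; X₂] = [X₁; X₂] · H₋. Then X₂ᵀ X₁ + X₁ᵀ X₂ = 0; that is, X₁ᵀ X₂ is skew-symmetric. -/
open Matrix

noncomputable section

namespace GraphSubspaceAux

open Polynomial

lemma eval_charpoly {n : ℕ} (M : Matrix (Fin n) (Fin n) ℂ) (μ : ℂ) :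
    M.charpoly.eval μ = ((μ • (1 : Matrix (Fin n) (Fin n) ℂ)) - M).det := by
  have : M.charpoly.eval μ = (evalRingHom μ) (Matrix.charmatrix M).det := rfl
  rw [this, RingHom.map_det]
  congr 1
  ext i j
  by_cases h : i = j
  · subst h
    simp [RingHom.mapMatrix_apply, Matrix.map_apply, Matrix.charmatrix_apply_eq,
      Matrix.one_apply]
  · simp [RingHom.mapMatrix_apply, Matrix.map_apply,
      Matrix.charmatrix_apply_ne _ _ _ h, Matrix.one_apply_ne h]

lemma mem_spectrum_iff {n : ℕ} (M : Matrix (Fin n) (Fin n) ℂ) (μ : ℂ) :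
    μ ∈ spectrum ℂ M ↔ M.charpoly.eval μ = 0 := by
  rw [spectrum.mem_iff, Algebra.algebraMap_eq_smul_one, eval_charpoly,
    Matrix.isUnit_iff_isUnit_det, isUnit_iff_ne_zero, not_not]

lemma spectrum_transpose {n : ℕ} (M : Matrix (Fin n) (Fin n) ℂ) :
    spectrum ℂ Mᵀ = spectrum ℂ M := by
  ext μ
  have key : (μ • (1 : Matrix (Fin n) (Fin n) ℂ)) - Mᵀ = ((μ • 1) - M)ᵀ := by
    rw [Matrix.transpose_sub, Matrix.transpose_smul, Matrix.transpose_one]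
  simp only [spectrum.mem_iff, Algebra.algebraMap_eq_smul_one,
    Matrix.isUnit_iff_isUnit_det, key, Matrix.det_transpose]

lemma spectrum_nonempty {n : ℕ} (hn : 0 < n) (M : Matrix (Fin n) (Fin n) ℂ) :
    (spectrum ℂ M).Nonempty := by
  have hdeg : M.charpoly.degree ≠ 0 := by
    rw [Matrix.charpoly_degree_eq_dim, Fintype.card_fin]
    exact_mod_cast hn.ne'
  obtain ⟨μ, hμ⟩ := IsAlgClosed.exists_root M.charpoly hdeg
  exact ⟨μ, (mem_spectrum_iff M μ).mpr hμ⟩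

end GraphSubspaceAux

/-- If `H = [[Ã, R̃], [−Q̃, −Ãᵀ]]` (with `R̃, Q̃` real skew-symmetric) satisfies
`H·[X₁; X₂] = [X₁; X₂]·H₋` with `H₋` Hurwitz, then `X₂ᵀX₁ + X₁ᵀX₂ = 0`,
i.e. `X₁ᵀX₂` is skew-symmetric. -/
theorem graph_subspace_skew
    (n : ℕ) (At Rt Qt : Matrix (Fin n) (Fin n) ℝ)
    (hR : Rtᵀ = -Rt) (hQ : Qtᵀ = -Qt)
    (X₁ X₂ Hminus : Matrix (Fin n) (Fin n) ℂ)
    (hHur : ∀ μ ∈ spectrum ℂ Hminus, μ.re < 0)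
    (hInv : Matrix.fromBlocks (toC At) (toC Rt) (-(toC Qt)) (-(toC At)ᵀ) *
        Matrix.fromRows X₁ X₂ = Matrix.fromRows X₁ X₂ * Hminus) :
    X₂ᵀ * X₁ + X₁ᵀ * X₂ = 0 := by
  rcases Nat.eq_zero_or_pos n with hn | hn
  · subst hn; exact Subsingleton.elim _ _
  open Polynomial GraphSubspaceAux in
  -- notation
  set Ac := toC At with hAc
  set Rc := toC Rt with hRc
  set Qc := toC Qt with hQc
  have hRcskew : Rcᵀ = -Rc := by
    ext i j
    have h := congrFun (congrFun hR i) j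
    simp only [Matrix.transpose_apply, Matrix.neg_apply] at h
    simp [hRc, toC, Matrix.transpose_apply, Matrix.map_apply, Matrix.neg_apply, h]
  have hQcskew : Qcᵀ = -Qc := by
    ext i j
    have h := congrFun (congrFun hQ i) j
    simp only [Matrix.transpose_apply, Matrix.neg_apply] at h
    simp [hQc, toC, Matrix.transpose_apply, Matrix.map_apply, Matrix.neg_apply, h]
  set Hc : Matrix (Fin n ⊕ Fin n) (Fin n ⊕ Fin n) ℂ :=
    Matrix.fromBlocks Ac Rc (-Qc) (-Acᵀ) with hHc
  set J : Matrix (Fin n ⊕ Fin n) (Fin n ⊕ Fin n) ℂ :=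
    Matrix.fromBlocks 0 1 1 0 with hJ
  set X := Matrix.fromRows X₁ X₂ with hX
  set M := J * Hc with hM
  have hJsymm : Jᵀ = J := by
    rw [hJ, Matrix.fromBlocks_transpose, Matrix.transpose_zero, Matrix.transpose_one]
  have hMval : M = Matrix.fromBlocks (-Qc) (-Acᵀ) Ac Rc := by
    rw [hM, hJ, hHc, Matrix.fromBlocks_multiply]
    simp
  have hMskew : Mᵀ = -M := by
    rw [hMval, Matrix.fromBlocks_transpose, Matrix.fromBlocks_neg]
    simp [hQcskew, hRcskew]
  -- K = Xᵀ J X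
  set K := X₂ᵀ * X₁ + X₁ᵀ * X₂ with hK
  have hKeq : K = Xᵀ * (J * X) := by
    have hJX : J * X = Matrix.fromRows X₂ X₁ := by
      rw [hJ, hX, Matrix.fromBlocks_mul_fromRows]
      simp
    rw [hJX, hX, Matrix.transpose_fromRows, Matrix.fromCols_mul_fromRows, hK]
    abel
  -- Lyapunov-type identity
  have hLyap : Hminusᵀ * K + K * Hminus = 0 := by
    have h1 : K * Hminus = Xᵀ * M * X := by
      rw [hKeq, hM]
      calc Xᵀ * (J * X) * Hminus = Xᵀ * J * (X * Hminus) := by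
            simp only [Matrix.mul_assoc]
        _ = Xᵀ * J * (Hc * X) := by rw [← hInv]
        _ = Xᵀ * (J * Hc) * X := by simp only [Matrix.mul_assoc]
    have h2 : Hminusᵀ * K = Xᵀ * (-M) * X := by
      have : Hminusᵀ * Xᵀ = (X * Hminus)ᵀ := (Matrix.transpose_mul X Hminus).symm
      rw [hKeq, ← Matrix.mul_assoc, this, ← hInv, Matrix.transpose_mul,
        Matrix.mul_assoc, ← hJsymm, ← Matrix.mul_assoc Hcᵀ,
        ← Matrix.transpose_mul, hMskew, ← Matrix.mul_assoc]
    rw [h1, h2]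
    simp [Matrix.neg_mul, Matrix.mul_neg]
  have hKH : K * Hminus = -Hminusᵀ * K := by
    have := hLyap
    linear_combination (norm := noncomm_ring) this
  -- intertwining: K * Hminus ^ m = (-Hminusᵀ)^m * K
  have hpow : ∀ m : ℕ, K * Hminus ^ m = (-Hminusᵀ) ^ m * K := by
    intro m
    induction m with
    | zero => simp
    | succ m ih =>
        rw [pow_succ, ← Matrix.mul_assoc, ih, Matrix.mul_assoc, hKH, pow_succ,
          Matrix.mul_assoc]
  set p := Hminus.charpoly with hp
  have hintertwine : (Polynomial.aeval (-Hminusᵀ) p) * K = 0 := by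
    have h1 : K * (Polynomial.aeval Hminus p) = (Polynomial.aeval (-Hminusᵀ) p) * K := by
      rw [Polynomial.aeval_eq_sum_range, Polynomial.aeval_eq_sum_range,
        Finset.mul_sum, Finset.sum_mul]
      refine Finset.sum_congr rfl fun i _ => ?_
      rw [mul_smul_comm, smul_mul_assoc, hpow]
    rw [← h1, Matrix.aeval_self_charpoly, Matrix.mul_zero]
  -- aeval (-Hminusᵀ) p is a unit
  have hunit : IsUnit (Polynomial.aeval (-Hminusᵀ) p) := by
    rw [← spectrum.zero_notMem_iff ℂ]
    rw [spectrum.map_polynomial_aeval_of_nonempty (-Hminusᵀ) p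
      (by
        apply spectrum_nonempty hn)]
    rintro ⟨μ, hμmem, hμ0⟩
    have hμspecneg : μ ∈ spectrum ℂ (-Hminus) := by
      have : spectrum ℂ (-Hminusᵀ) = spectrum ℂ (-Hminus) := by
        rw [show (-Hminusᵀ) = (-Hminus)ᵀ by rw [Matrix.transpose_neg], spectrum_transpose]
      rwa [this] at hμmem
    have h1 : (-μ) ∈ spectrum ℂ Hminus := by
      rw [← spectrum.neg_eq, Set.mem_neg] at hμspecneg
      exact hμspecneg
    have h2 : μ ∈ spectrum ℂ Hminus := (mem_spectrum_iff Hminus μ).mpr hμ0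
    have := hHur _ h1
    have := hHur _ h2
    simp only [Complex.neg_re] at *
    linarith
  -- conclude
  have : K = 0 := by
    have := hintertwine
    calc K = (↑hunit.unit⁻¹ : Matrix (Fin n) (Fin n) ℂ) *
        ((Polynomial.aeval (-Hminusᵀ) p) * K) := by
          rw [← Matrix.mul_assoc, IsUnit.val_inv_mul, Matrix.one_mul]
      _ = 0 := by rw [hintertwine, Matrix.mul_zero]
  exact this
end
end
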